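/- Suppose c₀ ∈ (0,∞) is such that ∫_{ℝ²×ℝ²} Φ(z) e^{−u‖z−z'‖₂²/4} Φ(z') dz dz' ≤ (1 + c₀ u)^{−1} for all u ≥ 0. Then for every ε ∈ (0,1) with β_ε ≥ 0, every t > 0, and all nonnegative f, g ∈ L²(ℝ²) with ‖f‖_{L²} ≤ 1 and ‖g‖_{L²} ≤ 1: 𝒥^ε(t; g, f) ≤ B_ε(t). -/

import Mathlib

open MeasureTheory Real Filter
open scoped ENNReal NNReal BigOperators

noncomputable section

/-- ℝ² realized as ℝ × ℝ. -/
abbrev R2 : Type := ℝ × ℝ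

/-- ℓ¹ norm on ℝ². -/
def nrm1 (x : R2) : ℝ := |x.1| + |x.2|

/-- square of the Euclidean norm on ℝ². -/
def nrmsq (x : R2) : ℝ := x.1 ^ 2 + x.2 ^ 2

/-- heat kernel on ℝ². -/
def hk (t : ℝ) (x : R2) : ℝ := (2 * π * t)⁻¹ * Real.exp (-nrmsq x / (2 * t))

/-- heat kernel on (ℝ²)ⁿ. -/
def G (n : ℕ) (t : ℝ) (x : Fin n → R2) : ℝ := ∏ i, hk t (x i)

/-- ℓ¹ norm on (ℝ²)ⁿ. -/
def nrm1n {n : ℕ} (x : Fin n → R2) : ℝ := ∑ i, nrm1 (x i)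

/-- unordered pairs α = {i < j} in {1,…,n}. -/
abbrev Pair (n : ℕ) : Type := {p : Fin n × Fin n // p.1 < p.2}

/-- the indices not in α. -/
abbrev outIdx {n : ℕ} (α : Pair n) : Type := {k : Fin n // k ≠ α.1.1 ∧ k ≠ α.1.2}

/-- Y_α = ℝ² × (ℝ²)^{[n]∖α} with first coordinate the center of mass. -/
abbrev Ysp {n : ℕ} (α : Pair n) : Type := R2 × (outIdx α → R2)

/-- Y^ε_α = ℝ² × ℝ² × (ℝ²)^{[n]∖α}, coordinates (y_r, y_c, (y_k)). -/
abbrev Yesp {n : ℕ} (α : Pair n) : Type := R2 × R2 × (outIdx α → R2)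

/-- S_α : Y_α → (ℝ²)ⁿ. -/
def Sa {n : ℕ} (α : Pair n) (y : Ysp α) : Fin n → R2 :=
  fun k => if h : k ≠ α.1.1 ∧ k ≠ α.1.2 then y.2 ⟨k, h⟩ else y.1

/-- S^ε_α : Y^ε_α → (ℝ²)ⁿ. -/
def Sea {n : ℕ} (α : Pair n) (ε : ℝ) (y : Yesp α) : Fin n → R2 :=
  fun k => if h : k ≠ α.1.1 ∧ k ≠ α.1.2 then y.2.2 ⟨k, h⟩
    else if k = α.1.1 then y.2.1 + (ε / 2) • y.1 else y.2.1 - (ε / 2) • y.1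

/-- j(t) = ∫_0^∞ t^{u-1} e^{θu} / Γ(u) du. -/
def jfun (θ t : ℝ) : ℝ := ∫ u in Set.Ioi (0 : ℝ), t ^ (u - 1) * Real.exp (θ * u) / Real.Gamma u

/-- J_α(t,u,v). -/
def Jker (θ : ℝ) {n : ℕ} (α : Pair n) (t : ℝ) (u v : Ysp α) : ℝ :=
  4 * π * jfun θ t * hk (t / 2) (u.1 - v.1) * ∏ k, hk t (u.2 k - v.2 k)

/-- iterated integral over τ_1,…,τ_k > 0 with τ_1 + ⋯ + τ_k = t (the last variable being
determined by the others). -/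
def simpInt : (k : ℕ) → ℝ → ((Fin k → ℝ) → ℝ≥0∞) → ℝ≥0∞
  | 0, t, f => if t = 0 then f (fun i => i.elim0) else 0
  | 1, t, f => if 0 < t then f (fun _ => t) else 0
  | (k + 2), t, f => ∫⁻ τ in Set.Ioo 0 t, simpInt (k + 1) (t - τ) (fun v => f (Fin.cons τ v))

/-- simplex integral over positive time variables indexed by a finite type, with total sum t. -/
def simpIntF (ι : Type*) [Fintype ι] (t : ℝ) (f : (ι → ℝ) → ℝ≥0∞) : ℝ≥0∞ :=
  simpInt (Fintype.card ι) t (fun τ => f (fun i => τ (Fintype.equivFin ι i)))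

/-- Dgm[n]: finite sequences of pairs with consecutive entries distinct. -/
abbrev Dgm (n : ℕ) : Type :=
  {d : Σ m : ℕ, Fin (m + 1) → Pair n // ∀ k : Fin d.1, d.2 k.castSucc ≠ d.2 k.succ}

/-- K^{α⃗}_t(x,x'), the diagram kernel for α⃗ = (α_0,…,α_m). -/
def Kdgm (θ : ℝ) {n : ℕ} (m : ℕ) (α : Fin (m + 1) → Pair n) (t : ℝ)
    (x x' : Fin n → R2) : ℝ≥0∞ :=
  simpIntF (Fin (m + 2) ⊕ Fin (m + 1)) t fun τ =>
    ∫⁻ u : ∀ k, Ysp (α k), ∫⁻ v : ∀ k, Ysp (α k),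
      ENNReal.ofReal (G n (τ (Sum.inl 0)) (Sa (α 0) (u 0) - x))
      * (∏ k, ENNReal.ofReal (Jker θ (α k) (τ (Sum.inr k)) (u k) (v k)))
      * (∏ k : Fin m, ENNReal.ofReal (G n (τ (Sum.inl k.succ.castSucc))
          (Sa (α k.castSucc) (v k.castSucc) - Sa (α k.succ) (u k.succ))))
      * ENNReal.ofReal
          (G n (τ (Sum.inl (Fin.last (m + 1)))) (Sa (α (Fin.last m)) (v (Fin.last m)) - x'))

/-- the limiting delta-Bose kernel K_t(x,x'). -/
def Klim (θ : ℝ) (n : ℕ) (t : ℝ) (x x' : Fin n → R2) : ℝ≥0∞ :=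
  ENNReal.ofReal (G n t (x - x')) + ∑' d : Dgm n, Kdgm θ d.1.1 d.1.2 t x x'

/-- standing assumptions on the mollifier Φ. -/
def PhiOK (Φ : R2 → ℝ) : Prop :=
  ContDiff ℝ (⊤ : ℕ∞) Φ ∧ HasCompactSupport Φ ∧ (∀ x, 0 ≤ Φ x) ∧ (∫ x : R2, Φ x) = 1

/-- the coupling constant β_ε. -/
def betaEps (θ : ℝ) (Φ : R2 → ℝ) (ε : ℝ) : ℝ :=
  2 * π / |Real.log ε| +
    π / (Real.log ε) ^ 2 *
      (θ - 2 * Real.log 2 + 2 * Real.eulerMascheroniConstant +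
        2 * ∫ x : R2, ∫ x' : R2, Φ x * Real.log (Real.sqrt (nrmsq (x - x'))) * Φ x')

/-- the chain kernel: k interior nodes, k+1 heat-kernel links at scale ε. -/
def chain (ε : ℝ) (Φ : R2 → ℝ) : (k : ℕ) → (Fin (k + 1) → ℝ) → R2 → R2 → ℝ≥0∞
  | 0, τ, z, z' => ENNReal.ofReal (hk (2 * τ 0) (ε • (z - z')))
  | (k + 1), τ, z, z' => ∫⁻ w : R2,
      ENNReal.ofReal (hk (2 * τ 0) (ε • (z - w)) * Φ w) * chain ε Φ k (fun i => τ i.succ) w z'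

/-- j^ε(t,z,z'). -/
def jEps (θ : ℝ) (Φ : R2 → ℝ) (ε t : ℝ) (z z' : R2) : ℝ≥0∞ :=
  ∑' k : ℕ, ENNReal.ofReal (betaEps θ Φ ε ^ (k + 2)) *
    simpInt (k + 1) t (fun τ =>
      ENNReal.ofReal (Real.sqrt (Φ z)) * chain ε Φ k τ z z' * ENNReal.ofReal (Real.sqrt (Φ z')))

/-- J^ε_α(t,u,v). -/
def Jeps (θ : ℝ) (Φ : R2 → ℝ) {n : ℕ} (α : Pair n) (ε t : ℝ) (u v : Yesp α) : ℝ≥0∞ :=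
  jEps θ Φ ε t u.1 v.1 * ENNReal.ofReal (hk (t / 2) (u.2.1 - v.2.1)) *
    ∏ k, ENNReal.ofReal (hk t (u.2.2 k - v.2.2 k))

/-- K^{ε,α⃗}_t(x,x'), the mollified diagram kernel, with the sum over S ⊆ {0,…,m}. -/
def KepsDgm (θ : ℝ) (Φ : R2 → ℝ) (ε : ℝ) {n : ℕ} (m : ℕ) (α : Fin (m + 1) → Pair n)
    (t : ℝ) (x x' : Fin n → R2) : ℝ≥0∞ :=
  ∑ S : Finset (Fin (m + 1)),
    ENNReal.ofReal (betaEps θ Φ ε ^ S.card) *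
      simpIntF (Fin (m + 2) ⊕ {k : Fin (m + 1) // k ∉ S}) t fun τ =>
        ∫⁻ u : ∀ k, Yesp (α k), ∫⁻ v : ∀ k : {k : Fin (m + 1) // k ∉ S}, Yesp (α k.1),
          (fun w : ∀ k, Yesp (α k) =>
            ENNReal.ofReal (Real.sqrt (Φ (u 0).1)) *
            ENNReal.ofReal (G n (τ (Sum.inl 0)) (Sea (α 0) ε (u 0) - x)) *
            (∏ k : {k : Fin (m + 1) // k ∉ S},
              Jeps θ Φ (α k.1) ε (τ (Sum.inr k)) (u k.1) (v k)) *
            (∏ k : Fin m, ENNReal.ofReal (Real.sqrt (Φ (w k.castSucc).1) *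
              G n (τ (Sum.inl k.succ.castSucc))
                (Sea (α k.castSucc) ε (w k.castSucc) - Sea (α k.succ) ε (u k.succ)) *
              Real.sqrt (Φ (u k.succ).1))) *
            ENNReal.ofReal (Real.sqrt (Φ (w (Fin.last m)).1) *
              G n (τ (Sum.inl (Fin.last (m + 1)))) (Sea (α (Fin.last m)) ε (w (Fin.last m)) - x')))
          (fun k => if h : k ∈ S then u k else v ⟨k, h⟩)

/-- the mollified delta-Bose kernel K^ε_t(x,x'). -/
def Keps (θ : ℝ) (Φ : R2 → ℝ) (ε : ℝ) (n : ℕ) (t : ℝ) (x x' : Fin n → R2) : ℝ≥0∞ :=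
  ENNReal.ofReal (G n t (x - x')) + ∑' d : Dgm n, KepsDgm θ Φ ε d.1.1 d.1.2 t x x'

/-- the pairing 𝒥^ε(t; g, f). -/
def Jpairing (θ : ℝ) (Φ : R2 → ℝ) (ε t : ℝ) (g f : R2 → ℝ≥0∞) : ℝ≥0∞ :=
  ∑' k : ℕ, ENNReal.ofReal (betaEps θ Φ ε ^ (k + 2)) *
    simpInt (k + 1) t (fun τ => ∫⁻ z : R2, ∫⁻ z' : R2,
      g z * ENNReal.ofReal (Real.sqrt (Φ z)) * chain ε Φ k τ z z' *
        ENNReal.ofReal (Real.sqrt (Φ z')) * f z')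

/-- the scalar majorant B_ε(t). -/
def Bfun (β c0 ε t : ℝ) : ℝ≥0∞ :=
  ENNReal.ofReal β * ∑' k : ℕ, simpInt (k + 1) t
    (fun τ => ∏ i, ENNReal.ofReal (β / (4 * π) * ((τ i) ^ 2 + c0 * ε ^ 2 * (τ i)) ^ (-(1/2) : ℝ)))

end

noncomputable section Aux18
open MeasureTheory Real Filter
open scoped ENNReal NNReal BigOperators

def Kk (ε τ : ℝ) (z w : R2) : ℝ≥0∞ := ENNReal.ofReal (hk (2 * τ) (ε • (z - w)))

def sphi (Φ : R2 → ℝ) (z : R2) : ℝ≥0∞ := ENNReal.ofReal (Real.sqrt (Φ z))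

def Cc (c0 ε τ : ℝ) : ℝ≥0∞ :=
  ENNReal.ofReal ((4 * π)⁻¹ * (τ ^ 2 + c0 * ε ^ 2 * τ) ^ (-(1/2) : ℝ))

lemma continuous_nrmsq : Continuous nrmsq := by unfold nrmsq; fun_prop

lemma continuous_hk (t : ℝ) : Continuous (hk t) := by
  unfold hk
  exact continuous_const.mul ((continuous_nrmsq.neg.div_const _).rexp)

lemma hk_nonneg {t : ℝ} (ht : 0 ≤ t) (x : R2) : 0 ≤ hk t x :=
  mul_nonneg (inv_nonneg.2 (by positivity)) (Real.exp_nonneg _)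

lemma meas_K (ε τ : ℝ) : Measurable fun p : R2 × R2 => Kk ε τ p.1 p.2 :=
  (((continuous_hk (2*τ)).comp
    (by fun_prop : Continuous fun p : R2 × R2 => ε • (p.1 - p.2))).measurable).ennreal_ofReal

lemma K_symm (ε τ : ℝ) (z w : R2) : Kk ε τ z w = Kk ε τ w z := by
  have h : nrmsq (ε • (z - w)) = nrmsq (ε • (w - z)) := by
    have e : (ε • (w - z)) = -(ε • (z - w)) := by rw [← smul_neg, neg_sub]
    rw [e]; simp [nrmsq, Prod.fst_neg, Prod.snd_neg, neg_sq]
  simp only [Kk, hk, h]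

lemma chain_meas (ε : ℝ) (Φ : R2 → ℝ) (hΦc : Continuous Φ) :
    ∀ (k : ℕ) (τ : Fin (k+1) → ℝ), Measurable fun p : R2 × R2 => chain ε Φ k τ p.1 p.2
  | 0, τ => by simpa [chain, Kk] using meas_K ε (τ 0)
  | (k+1), τ => by
      have h1 : Measurable fun q : (R2 × R2) × R2 =>
          ENNReal.ofReal (hk (2 * τ 0) (ε • (q.1.1 - q.2)) * Φ q.2) *
            chain ε Φ k (fun i => τ i.succ) q.2 q.1.2 := by
        apply Measurable.mul
        · apply Measurable.ennreal_ofReal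
          exact (((continuous_hk _).comp (by fun_prop)).mul (hΦc.comp continuous_snd)).measurable
        · exact (chain_meas ε Φ hΦc k _).comp (measurable_snd.prodMk measurable_fst.snd)
      simpa [chain] using h1.lintegral_prod_right'

lemma sphi_sq (Φ : R2 → ℝ) (hΦ0 : ∀ x, 0 ≤ Φ x) (z : R2) :
    sphi Φ z * sphi Φ z = ENNReal.ofReal (Φ z) := by
  rw [sphi, ← ENNReal.ofReal_mul (Real.sqrt_nonneg _), Real.mul_self_sqrt (hΦ0 z)]

lemma cs2 {α : Type*} [MeasurableSpace α] (μ : Measure α) {a b : α → ℝ≥0∞}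
    (ha : AEMeasurable a μ) (hb : AEMeasurable b μ) :
    (∫⁻ x, a x * b x ∂μ) ^ 2 ≤ (∫⁻ x, a x ^ 2 ∂μ) * (∫⁻ x, b x ^ 2 ∂μ) := by
  have hpq : Real.HolderConjugate 2 2 := Real.holderConjugate_iff.mpr ⟨one_lt_two, by norm_num⟩
  have h := ENNReal.lintegral_mul_le_Lp_mul_Lq μ hpq ha hb
  simp only [Pi.mul_apply] at h
  have h2 : ∀ c : ℝ≥0∞, c ^ (2:ℝ) = c ^ (2:ℕ) := fun c => by
    rw [← ENNReal.rpow_natCast]; norm_num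
  simp only [h2] at h
  rw [pow_two]
  refine le_trans (mul_le_mul' h h) (le_of_eq ?_)
  rw [mul_mul_mul_comm, ← ENNReal.rpow_add_of_nonneg _ _ (by norm_num) (by norm_num),
    ← ENNReal.rpow_add_of_nonneg _ _ (by norm_num) (by norm_num)]
  norm_num

lemma hs_bound (Φ : R2 → ℝ) (hΦ : PhiOK Φ) (c0 : ℝ) (hc0 : 0 < c0)
    (hb : ∀ u : ℝ, 0 ≤ u →
      (∫ z : R2, ∫ z' : R2, Φ z * Real.exp (-(u * nrmsq (z - z')) / 4) * Φ z') ≤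
        (1 + c0 * u)⁻¹)
    (ε : ℝ) (hε : 0 < ε) {τ : ℝ} (hτ : 0 < τ) :
    ∫⁻ z : R2, ENNReal.ofReal (Φ z) * ∫⁻ z' : R2, (Kk ε τ z z') ^ 2 * ENNReal.ofReal (Φ z')
      ≤ (Cc c0 ε τ) ^ 2 := by
  obtain ⟨hΦs, hΦsupp, hΦ0, hΦint⟩ := hΦ
  set u : ℝ := 2 * ε ^ 2 / τ with hu_def
  have hu : 0 ≤ u := by positivity
  have hτ' : τ ≠ 0 := ne_of_gt hτ
  -- pointwise kernel identity
  have hker : ∀ z z' : R2, ENNReal.ofReal (Φ z) * ((Kk ε τ z z') ^ 2 * ENNReal.ofReal (Φ z'))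
      = ENNReal.ofReal (((4 * π * τ)⁻¹) ^ 2) *
        ENNReal.ofReal (Φ z * Real.exp (-(u * nrmsq (z - z')) / 4) * Φ z') := by
    intro z z'
    have h1 : nrmsq (ε • (z - z')) = ε ^ 2 * nrmsq (z - z') := by
      simp only [nrmsq, Prod.smul_fst, Prod.smul_snd, smul_eq_mul]; ring
    have hhk : hk (2 * τ) (ε • (z - z')) = (4 * π * τ)⁻¹ * Real.exp (-(u * nrmsq (z - z')) / 8) := by
      unfold hk
      rw [h1]
      congr 1
      · congr 1; ring
      · congr 1; rw [hu_def]; field_simp; ring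
    have hk2 : hk (2 * τ) (ε • (z - z')) ^ 2
        = ((4 * π * τ)⁻¹) ^ 2 * Real.exp (-(u * nrmsq (z - z')) / 4) := by
      rw [hhk, mul_pow, pow_two (Real.exp _), ← Real.exp_add]
      congr 2; ring
    rw [Kk, ← ENNReal.ofReal_pow (hk_nonneg (by positivity) _), hk2]
    rw [← ENNReal.ofReal_mul (by positivity), ← ENNReal.ofReal_mul (hΦ0 z),
      ← ENNReal.ofReal_mul (by positivity)]
    congr 1; ring
  -- the double integral of F
  set F : R2 × R2 → ℝ := fun p => Φ p.1 * Real.exp (-(u * nrmsq (p.1 - p.2)) / 4) * Φ p.2 with hF_def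
  have hFc : Continuous F := by
    apply Continuous.mul
    apply Continuous.mul
    · exact hΦs.continuous.comp continuous_fst
    · exact ((continuous_const.mul (continuous_nrmsq.comp
        (continuous_fst.sub continuous_snd))).neg.div_const 4).rexp
    · exact hΦs.continuous.comp continuous_snd
  have hFsupp : HasCompactSupport F := by
    apply HasCompactSupport.intro (hΦsupp.prod hΦsupp)
    intro p hp
    simp only [Set.mem_prod, not_and_or] at hp
    rcases hp with h | h
    · have : Φ p.1 = 0 := image_eq_zero_of_notMem_tsupport h
      simp [hF_def, this]
    · have : Φ p.2 = 0 := image_eq_zero_of_notMem_tsupport h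
      simp [hF_def, this]
  have hFi : Integrable F := hFc.integrable_of_hasCompactSupport hFsupp
  have hFnn : ∀ p, 0 ≤ F p := fun p =>
    mul_nonneg (mul_nonneg (hΦ0 _) (Real.exp_nonneg _)) (hΦ0 _)
  have key : (∫⁻ z : R2, ∫⁻ z' : R2, ENNReal.ofReal (F (z, z')))
      ≤ ENNReal.ofReal ((1 + c0 * u)⁻¹) := by
    have h1 : (∫⁻ z : R2, ∫⁻ z' : R2, ENNReal.ofReal (F (z, z')))
        = ∫⁻ p : R2 × R2, ENNReal.ofReal (F p) := by
      exact (lintegral_prod (fun p => ENNReal.ofReal (F p))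
        (hFc.measurable.ennreal_ofReal).aemeasurable).symm
    have h2 : (∫⁻ p : R2 × R2, ENNReal.ofReal (F p)) = ENNReal.ofReal (∫ p, F p) :=
      (ofReal_integral_eq_lintegral_ofReal hFi (ae_of_all _ hFnn)).symm
    have h3 : (∫ p : R2 × R2, F p) = ∫ z : R2, ∫ z' : R2, F (z, z') := by
      exact integral_prod F hFi
    rw [h1, h2, h3]
    exact ENNReal.ofReal_le_ofReal (hb u hu)
  -- combine
  have hmeas_inner : ∀ z : R2, Measurable fun z' : R2 =>
      (Kk ε τ z z') ^ 2 * ENNReal.ofReal (Φ z') := by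
    intro z
    exact (((meas_K ε τ).comp measurable_prodMk_left).pow_const 2).mul
      (hΦs.continuous.measurable.ennreal_ofReal)
  calc (∫⁻ z : R2, ENNReal.ofReal (Φ z) * ∫⁻ z' : R2, (Kk ε τ z z') ^ 2 * ENNReal.ofReal (Φ z'))
      = ∫⁻ z : R2, ∫⁻ z' : R2,
          ENNReal.ofReal (Φ z) * ((Kk ε τ z z') ^ 2 * ENNReal.ofReal (Φ z')) := by
        apply lintegral_congr; intro z
        exact (lintegral_const_mul _ (hmeas_inner z)).symm
    _ = ∫⁻ z : R2, ∫⁻ z' : R2,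
          ENNReal.ofReal (((4 * π * τ)⁻¹) ^ 2) * ENNReal.ofReal (F (z, z')) := by
        apply lintegral_congr; intro z; apply lintegral_congr; intro z'
        exact hker z z'
    _ = ENNReal.ofReal (((4 * π * τ)⁻¹) ^ 2) * ∫⁻ z : R2, ∫⁻ z' : R2, ENNReal.ofReal (F (z, z')) := by
        rw [← lintegral_const_mul' _ _ ENNReal.ofReal_ne_top]
        apply lintegral_congr; intro z
        rw [← lintegral_const_mul' _ _ ENNReal.ofReal_ne_top]
    _ ≤ ENNReal.ofReal (((4 * π * τ)⁻¹) ^ 2) * ENNReal.ofReal ((1 + c0 * u)⁻¹) :=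
        mul_le_mul_right key _
    _ ≤ (Cc c0 ε τ) ^ 2 := by
        rw [← ENNReal.ofReal_mul (by positivity), Cc,
          ← ENNReal.ofReal_pow (by positivity)]
        apply ENNReal.ofReal_le_ofReal
        have hSpos : 0 < τ ^ 2 + c0 * ε ^ 2 * τ := by positivity
        have hrpow : (((τ ^ 2 + c0 * ε ^ 2 * τ) ^ (-(1/2) : ℝ)) : ℝ) ^ (2:ℕ)
            = (τ ^ 2 + c0 * ε ^ 2 * τ)⁻¹ := by
          rw [← Real.rpow_natCast ((τ ^ 2 + c0 * ε ^ 2 * τ) ^ (-(1/2) : ℝ)) 2,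
            ← Real.rpow_mul hSpos.le]
          norm_num [Real.rpow_neg_one]
        rw [mul_pow, hrpow]
        have e2 : τ ^ 2 * (1 + c0 * u) = τ ^ 2 + 2 * c0 * ε ^ 2 * τ := by
          rw [hu_def]; field_simp
        have e1 : ((4 * π * τ)⁻¹) ^ 2 * (1 + c0 * u)⁻¹
            = ((4 * π)⁻¹) ^ 2 * (τ ^ 2 + 2 * c0 * ε ^ 2 * τ)⁻¹ := by
          rw [← e2]
          have h1cu : (0:ℝ) < 1 + c0 * u := by positivity
          field_simp
        rw [e1]
        apply mul_le_mul_of_nonneg_left _ (by positivity)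
        apply inv_anti₀ hSpos
        nlinarith [mul_pos (mul_pos hc0 (pow_pos hε 2)) hτ]
lemma meas_K_right (ε τ : ℝ) (z : R2) : Measurable fun z' => Kk ε τ z z' :=
  Measurable.ennreal_ofReal (Continuous.measurable ((continuous_hk _).comp
    (by fun_prop : Continuous fun z' : R2 => ε • (z - z'))))

lemma meas_K_left (ε τ : ℝ) (w : R2) : Measurable fun z => Kk ε τ z w :=
  Measurable.ennreal_ofReal (Continuous.measurable ((continuous_hk _).comp
    (by fun_prop : Continuous fun z : R2 => ε • (z - w))))

lemma chain_meas_left (ε : ℝ) (Φ : R2 → ℝ) (hΦc : Continuous Φ) (k : ℕ)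
    (τ : Fin (k+1) → ℝ) (z' : R2) : Measurable fun w => chain ε Φ k τ w z' :=
  (chain_meas ε Φ hΦc k τ).comp (measurable_id.prodMk measurable_const)

lemma chain_meas_right (ε : ℝ) (Φ : R2 → ℝ) (hΦc : Continuous Φ) (k : ℕ)
    (τ : Fin (k+1) → ℝ) (w : R2) : Measurable fun z' => chain ε Φ k τ w z' :=
  (chain_meas ε Φ hΦc k τ).comp (measurable_const.prodMk measurable_id)
set_option maxHeartbeats 1000000 in
lemma opEst (Φ : R2 → ℝ) (hΦ : PhiOK Φ) (c0 : ℝ) (hc0 : 0 < c0)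
    (hb : ∀ u : ℝ, 0 ≤ u →
      (∫ z : R2, ∫ z' : R2, Φ z * Real.exp (-(u * nrmsq (z - z')) / 4) * Φ z') ≤
        (1 + c0 * u)⁻¹)
    (ε : ℝ) (hε : 0 < ε) {τ : ℝ} (hτ : 0 < τ) (f : R2 → ℝ≥0∞) (hf : Measurable f) :
    ∫⁻ z : R2, (sphi Φ z * ∫⁻ z' : R2, Kk ε τ z z' * (sphi Φ z' * f z')) ^ 2
      ≤ Cc c0 ε τ ^ 2 * ∫⁻ z : R2, f z ^ 2 := by
  have hΦ0 := hΦ.2.2.1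
  have hΦc : Continuous Φ := hΦ.1.continuous
  have hsphim : Measurable (sphi Φ) :=
    (hΦc.sqrt.measurable).ennreal_ofReal
  have hmK : ∀ z : R2, Measurable fun z' => Kk ε τ z z' := meas_K_right ε τ
  have step1 : ∀ z : R2, (sphi Φ z * ∫⁻ z' : R2, Kk ε τ z z' * (sphi Φ z' * f z')) ^ 2 ≤
      ENNReal.ofReal (Φ z) *
        ((∫⁻ z' : R2, Kk ε τ z z' ^ 2 * ENNReal.ofReal (Φ z')) * ∫⁻ z' : R2, f z' ^ 2) := by
    intro z
    rw [mul_pow, pow_two (sphi Φ z), sphi_sq Φ hΦ0 z]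
    apply mul_le_mul_right
    calc (∫⁻ z' : R2, Kk ε τ z z' * (sphi Φ z' * f z')) ^ 2
        = (∫⁻ z' : R2, (Kk ε τ z z' * sphi Φ z') * f z') ^ 2 := by
          congr 1; apply lintegral_congr; intro z'; rw [mul_assoc]
      _ ≤ (∫⁻ z' : R2, (Kk ε τ z z' * sphi Φ z') ^ 2) * ∫⁻ z' : R2, f z' ^ 2 :=
          cs2 volume ((hmK z).mul hsphim).aemeasurable hf.aemeasurable
      _ = (∫⁻ z' : R2, Kk ε τ z z' ^ 2 * ENNReal.ofReal (Φ z')) * ∫⁻ z' : R2, f z' ^ 2 := by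
          congr 1; apply lintegral_congr; intro z'
          rw [mul_pow, pow_two (sphi Φ z'), sphi_sq Φ hΦ0 z']
  have hmI : Measurable fun z : R2 =>
      ENNReal.ofReal (Φ z) * ∫⁻ z' : R2, Kk ε τ z z' ^ 2 * ENNReal.ofReal (Φ z') := by
    apply Measurable.mul (hΦc.measurable.ennreal_ofReal)
    apply Measurable.lintegral_prod_right'
      (f := fun p : R2 × R2 => Kk ε τ p.1 p.2 ^ 2 * ENNReal.ofReal (Φ p.2))
    exact ((meas_K ε τ).pow_const 2).mul (hΦc.measurable.ennreal_ofReal.comp measurable_snd)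
  calc ∫⁻ z : R2, (sphi Φ z * ∫⁻ z' : R2, Kk ε τ z z' * (sphi Φ z' * f z')) ^ 2
      ≤ ∫⁻ z : R2, ENNReal.ofReal (Φ z) *
          ((∫⁻ z' : R2, Kk ε τ z z' ^ 2 * ENNReal.ofReal (Φ z')) * ∫⁻ z' : R2, f z' ^ 2) :=
        lintegral_mono step1
    _ = (∫⁻ z : R2, ENNReal.ofReal (Φ z) * ∫⁻ z' : R2, Kk ε τ z z' ^ 2 * ENNReal.ofReal (Φ z'))
          * ∫⁻ z' : R2, f z' ^ 2 := by
        rw [← lintegral_mul_const _ hmI]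
        apply lintegral_congr; intro z; rw [mul_assoc]
    _ ≤ Cc c0 ε τ ^ 2 * ∫⁻ z : R2, f z ^ 2 :=
        mul_le_mul_left (hs_bound Φ hΦ c0 hc0 hb ε hε hτ) _

set_option maxHeartbeats 2000000 in
lemma bilin (Φ : R2 → ℝ) (hΦ : PhiOK Φ) (c0 : ℝ) (hc0 : 0 < c0)
    (hb : ∀ u : ℝ, 0 ≤ u →
      (∫ z : R2, ∫ z' : R2, Φ z * Real.exp (-(u * nrmsq (z - z')) / 4) * Φ z') ≤
        (1 + c0 * u)⁻¹)
    (ε : ℝ) (hε : 0 < ε) (k : ℕ) :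
    ∀ (τ : Fin (k+1) → ℝ), (∀ i, 0 < τ i) →
      ∀ (g f : R2 → ℝ≥0∞), Measurable g → Measurable f →
      (∫⁻ z : R2, ∫⁻ z' : R2,
          g z * sphi Φ z * chain ε Φ k τ z z' * sphi Φ z' * f z') ^ 2
        ≤ ((∏ i, Cc c0 ε (τ i)) ^ 2 * ∫⁻ z : R2, g z ^ 2) * ∫⁻ z : R2, f z ^ 2 := by
  have hΦ0 := hΦ.2.2.1
  have hΦc : Continuous Φ := hΦ.1.continuous
  have hsphim : Measurable (sphi Φ) := (hΦc.sqrt.measurable).ennreal_ofReal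
  induction k with
  | zero =>
    intro τ hτ g f hg hf
    have hmK := meas_K_right ε (τ 0)
    have hchain : ∀ z z' : R2, chain ε Φ 0 τ z z' = Kk ε (τ 0) z z' := fun z z' => rfl
    have hH : Measurable fun z : R2 =>
        sphi Φ z * ∫⁻ z' : R2, Kk ε (τ 0) z z' * (sphi Φ z' * f z') := by
      apply hsphim.mul
      apply Measurable.lintegral_prod_right'
        (f := fun p : R2 × R2 => Kk ε (τ 0) p.1 p.2 * (sphi Φ p.2 * f p.2))
      exact (meas_K ε (τ 0)).mul ((hsphim.comp measurable_snd).mul (hf.comp measurable_snd))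
    have hEeq : (∫⁻ z : R2, ∫⁻ z' : R2,
          g z * sphi Φ z * chain ε Φ 0 τ z z' * sphi Φ z' * f z')
        = ∫⁻ z : R2, g z * (sphi Φ z * ∫⁻ z' : R2, Kk ε (τ 0) z z' * (sphi Φ z' * f z')) := by
      apply lintegral_congr; intro z
      calc ∫⁻ z' : R2, g z * sphi Φ z * chain ε Φ 0 τ z z' * sphi Φ z' * f z'
          = ∫⁻ z' : R2, (g z * sphi Φ z) * (Kk ε (τ 0) z z' * (sphi Φ z' * f z')) := by
            apply lintegral_congr; intro z'; rw [hchain]; ring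
        _ = (g z * sphi Φ z) * ∫⁻ z' : R2, Kk ε (τ 0) z z' * (sphi Φ z' * f z') :=
            lintegral_const_mul _ ((hmK z).mul (hsphim.mul hf))
        _ = g z * (sphi Φ z * ∫⁻ z' : R2, Kk ε (τ 0) z z' * (sphi Φ z' * f z')) := by ring
    rw [hEeq]
    calc (∫⁻ z : R2, g z * (sphi Φ z * ∫⁻ z' : R2, Kk ε (τ 0) z z' * (sphi Φ z' * f z'))) ^ 2
        ≤ (∫⁻ z : R2, g z ^ 2) *
            ∫⁻ z : R2, (sphi Φ z * ∫⁻ z' : R2, Kk ε (τ 0) z z' * (sphi Φ z' * f z')) ^ 2 :=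
          cs2 volume hg.aemeasurable hH.aemeasurable
      _ ≤ (∫⁻ z : R2, g z ^ 2) * (Cc c0 ε (τ 0) ^ 2 * ∫⁻ z : R2, f z ^ 2) :=
          mul_le_mul_right (opEst Φ hΦ c0 hc0 hb ε hε (hτ 0) f hf) _
      _ = ((∏ i, Cc c0 ε (τ i)) ^ 2 * ∫⁻ z : R2, g z ^ 2) * ∫⁻ z : R2, f z ^ 2 := by
          rw [Fin.prod_univ_one]; ring
  | succ k ih =>
    intro τ hτ g f hg hf
    set φ := sphi Φ with hφdef
    set τ' : Fin (k+1) → ℝ := fun i => τ i.succ with hτ'def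
    have hτ'pos : ∀ i, 0 < τ' i := fun i => hτ _
    set K := Kk ε (τ 0) with hKdef
    have hmKl := meas_K_left ε (τ 0)
    have hmKr := meas_K_right ε (τ 0)
    have hchainP := chain_meas ε Φ hΦc k τ'
    have hchainR := chain_meas_right ε Φ hΦc k τ'
    set A : R2 → ℝ≥0∞ := fun w => φ w * ∫⁻ z : R2, K w z * (φ z * g z) with hAdef
    have hAmeas : Measurable A := by
      apply hsphim.mul
      apply Measurable.lintegral_prod_right'
        (f := fun p : R2 × R2 => Kk ε (τ 0) p.1 p.2 * (φ p.2 * g p.2))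
      exact (meas_K ε (τ 0)).mul ((hsphim.comp measurable_snd).mul (hg.comp measurable_snd))
    set Bv : R2 → ℝ≥0∞ := fun w => ∫⁻ z' : R2, chain ε Φ k τ' w z' * (φ z' * f z') with hBdef
    have hBmeas : Measurable Bv := by
      apply Measurable.lintegral_prod_right'
        (f := fun p : R2 × R2 => chain ε Φ k τ' p.1 p.2 * (φ p.2 * f p.2))
      exact hchainP.mul ((hsphim.comp measurable_snd).mul (hf.comp measurable_snd))
    have hchain1 : ∀ z z' : R2, chain ε Φ (k+1) τ z z'
        = ∫⁻ w : R2, (K z w * (φ w * φ w)) * chain ε Φ k τ' w z' := by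
      intro z z'
      show (∫⁻ w : R2, ENNReal.ofReal (hk (2 * τ 0) (ε • (z - w)) * Φ w) *
          chain ε Φ k (fun i => τ i.succ) w z') = _
      apply lintegral_congr; intro w
      congr 1
      rw [ENNReal.ofReal_mul (hk_nonneg (by have := hτ 0; positivity) _), ← sphi_sq Φ hΦ0 w]
      rfl
    set P : R2 → R2 → ℝ≥0∞ := fun z w => (g z * φ z) * (K z w * φ w) with hPdef
    set Q : R2 → R2 → ℝ≥0∞ := fun w z' => (φ w * chain ε Φ k τ' w z') * (φ z' * f z') with hQdef
    have hmPz : ∀ w, Measurable fun z => P z w := fun w =>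
      (hg.mul hsphim).mul ((hmKl w).mul measurable_const)
    have hmPw : ∀ z, Measurable fun w => P z w := fun z =>
      measurable_const.mul ((hmKr z).mul hsphim)
    have hmQz' : ∀ w, Measurable fun z' => Q w z' := fun w =>
      (measurable_const.mul (hchainR w)).mul (hsphim.mul hf)
    have e1 : (∫⁻ z : R2, ∫⁻ z' : R2, g z * φ z * chain ε Φ (k+1) τ z z' * φ z' * f z')
        = ∫⁻ z : R2, ∫⁻ w : R2, P z w * (φ w * Bv w) := by
      apply lintegral_congr; intro z
      calc ∫⁻ z' : R2, g z * φ z * chain ε Φ (k+1) τ z z' * φ z' * f z'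
          = ∫⁻ z' : R2, ∫⁻ w : R2, P z w * Q w z' := by
            apply lintegral_congr; intro z'
            rw [hchain1]
            rw [show g z * φ z * (∫⁻ w : R2, (K z w * (φ w * φ w)) * chain ε Φ k τ' w z')
                  * φ z' * f z'
                = (g z * φ z) * ((∫⁻ w : R2, (K z w * (φ w * φ w)) * chain ε Φ k τ' w z')
                  * (φ z' * f z')) from by ring]
            rw [← lintegral_mul_const _ (f := fun w => (K z w * (φ w * φ w)) * chain ε Φ k τ' w z') (((hmKr z).mul (hsphim.mul hsphim)).mul
                  (chain_meas_left ε Φ hΦc k τ' z')),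
                ← lintegral_const_mul _ (f := fun w => (K z w * (φ w * φ w)) * chain ε Φ k τ' w z' * (φ z' * f z')) ((((hmKr z).mul (hsphim.mul hsphim)).mul
                  (chain_meas_left ε Φ hΦc k τ' z')).mul measurable_const)]
            apply lintegral_congr; intro w
            simp only [hPdef, hQdef]; ring
        _ = ∫⁻ w : R2, ∫⁻ z' : R2, P z w * Q w z' := by
            apply lintegral_lintegral_swap
            apply Measurable.aemeasurable
            have : Measurable fun q : R2 × R2 => P z q.2 * Q q.2 q.1 := by
              apply Measurable.mul
              · exact (hmPw z).comp measurable_snd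
              · apply Measurable.mul
                · exact (hsphim.comp measurable_snd).mul
                    ((chain_meas ε Φ hΦc k τ').comp (measurable_snd.prodMk measurable_fst))
                · exact ((hsphim.comp measurable_fst).mul (hf.comp measurable_fst))
            exact this
        _ = ∫⁻ w : R2, P z w * ∫⁻ z' : R2, Q w z' := by
            apply lintegral_congr; intro w
            exact lintegral_const_mul _ (hmQz' w)
        _ = ∫⁻ w : R2, P z w * (φ w * Bv w) := by
            apply lintegral_congr; intro w
            congr 1
            calc ∫⁻ z' : R2, Q w z'
                = ∫⁻ z' : R2, φ w * (chain ε Φ k τ' w z' * (φ z' * f z')) := by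
                  apply lintegral_congr; intro z'; simp only [hQdef]; ring
              _ = φ w * Bv w := lintegral_const_mul _ ((hchainR w).mul (hsphim.mul hf))
    have e2 : (∫⁻ z : R2, ∫⁻ w : R2, P z w * (φ w * Bv w)) = ∫⁻ w : R2, A w * (φ w * Bv w) := by
      rw [lintegral_lintegral_swap]
      · apply lintegral_congr; intro w
        rw [lintegral_mul_const _ (hmPz w)]
        congr 1
        calc ∫⁻ z : R2, P z w = ∫⁻ z : R2, φ w * (K w z * (φ z * g z)) := by
              apply lintegral_congr; intro z
              simp only [hPdef, hKdef]
              rw [K_symm ε (τ 0) z w]; ring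
          _ = φ w * ∫⁻ z : R2, K w z * (φ z * g z) :=
              lintegral_const_mul _ ((hmKr w).mul (hsphim.mul hg))
          _ = A w := rfl
      · apply Measurable.aemeasurable
        have : Measurable fun q : R2 × R2 => P q.1 q.2 * (φ q.2 * Bv q.2) := by
          apply Measurable.mul
          · exact ((hg.comp measurable_fst).mul (hsphim.comp measurable_fst)).mul
              ((meas_K ε (τ 0)).mul (hsphim.comp measurable_snd))
          · exact (hsphim.comp measurable_snd).mul (hBmeas.comp measurable_snd)
        exact this
    have e3 : (∫⁻ w : R2, ∫⁻ z' : R2, A w * φ w * chain ε Φ k τ' w z' * φ z' * f z')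
        = ∫⁻ w : R2, A w * (φ w * Bv w) := by
      apply lintegral_congr; intro w
      calc ∫⁻ z' : R2, A w * φ w * chain ε Φ k τ' w z' * φ z' * f z'
          = ∫⁻ z' : R2, (A w * φ w) * (chain ε Φ k τ' w z' * (φ z' * f z')) := by
            apply lintegral_congr; intro z'; ring
        _ = (A w * φ w) * Bv w := lintegral_const_mul _ ((hchainR w).mul (hsphim.mul hf))
        _ = A w * (φ w * Bv w) := by ring
    rw [e1, e2, ← e3]
    calc (∫⁻ w : R2, ∫⁻ z' : R2, A w * φ w * chain ε Φ k τ' w z' * φ z' * f z') ^ 2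
        ≤ ((∏ i, Cc c0 ε (τ' i)) ^ 2 * ∫⁻ w : R2, A w ^ 2) * ∫⁻ z : R2, f z ^ 2 :=
          ih τ' hτ'pos A f hAmeas hf
      _ ≤ ((∏ i, Cc c0 ε (τ' i)) ^ 2 * (Cc c0 ε (τ 0) ^ 2 * ∫⁻ z : R2, g z ^ 2))
            * ∫⁻ z : R2, f z ^ 2 := by
          apply mul_le_mul_left
          apply mul_le_mul_right
          exact opEst Φ hΦ c0 hc0 hb ε hε (hτ 0) g hg
      _ = ((∏ i, Cc c0 ε (τ i)) ^ 2 * ∫⁻ z : R2, g z ^ 2) * ∫⁻ z : R2, f z ^ 2 := by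
          have hp : (∏ i, Cc c0 ε (τ i))
              = Cc c0 ε (τ 0) * ∏ i : Fin (k+1), Cc c0 ε (τ' i) := by
            rw [Fin.prod_univ_succ, hτ'def]
          rw [hp]; ring

lemma simpInt_mono : ∀ (n : ℕ) (t : ℝ) (F G : (Fin n → ℝ) → ℝ≥0∞),
    (∀ τ, (∀ i, 0 < τ i) → F τ ≤ G τ) → simpInt n t F ≤ simpInt n t G
  | 0, t, F, G, h => by
      simp only [simpInt]
      split_ifs
      · exact h _ (fun i => i.elim0)
      · exact le_rfl
  | 1, t, F, G, h => by
      simp only [simpInt]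
      split_ifs with h1
      · exact h _ (fun i => h1)
      · exact le_rfl
  | (n+2), t, F, G, h => by
      simp only [simpInt]
      refine lintegral_mono_ae ((ae_restrict_iff' measurableSet_Ioo).2 (ae_of_all _ ?_))
      intro τ hτ
      refine simpInt_mono (n+1) (t - τ) _ _ ?_
      intro v hv
      refine h _ ?_
      intro i
      refine Fin.cases ?_ ?_ i
      · simpa using hτ.1
      · intro j; simpa using hv j

lemma simpInt_const_mul (c : ℝ≥0∞) (hc : c ≠ ⊤) : ∀ (n : ℕ) (t : ℝ)
    (F : (Fin n → ℝ) → ℝ≥0∞), simpInt n t (fun τ => c * F τ) = c * simpInt n t F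
  | 0, t, F => by
      simp only [simpInt]; split_ifs <;> simp
  | 1, t, F => by
      simp only [simpInt]; split_ifs <;> simp
  | (n+2), t, F => by
      simp only [simpInt]
      rw [← lintegral_const_mul' _ _ hc]
      exact lintegral_congr fun τ => simpInt_const_mul c hc (n+1) (t - τ) _

theorem stmt18' (θ : ℝ) (Φ : R2 → ℝ) (hΦ : PhiOK Φ) (c0 : ℝ) (hc0 : 0 < c0)
    (hb : ∀ u : ℝ, 0 ≤ u →
      (∫ z : R2, ∫ z' : R2, Φ z * Real.exp (-(u * nrmsq (z - z')) / 4) * Φ z') ≤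
        (1 + c0 * u)⁻¹)
    (ε : ℝ) (hε : 0 < ε) (hε1 : ε < 1) (hβ : 0 ≤ betaEps θ Φ ε)
    (t : ℝ) (ht : 0 < t)
    (g f : R2 → ℝ≥0∞) (hg : Measurable g) (hf : Measurable f)
    (hgn : (∫⁻ z, (g z) ^ 2) ≤ 1) (hfn : (∫⁻ z, (f z) ^ 2) ≤ 1) :
    Jpairing θ Φ ε t g f ≤ Bfun (betaEps θ Φ ε) c0 ε t := by
  set β := betaEps θ Φ ε with hβdef
  rw [Jpairing, Bfun, ← ENNReal.tsum_mul_left]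
  apply ENNReal.tsum_le_tsum
  intro k
  have hterm : ∀ τ : Fin (k+1) → ℝ, (∀ i, 0 < τ i) →
      ENNReal.ofReal (β ^ (k+1)) * (∫⁻ z : R2, ∫⁻ z' : R2,
          g z * ENNReal.ofReal (Real.sqrt (Φ z)) * chain ε Φ k τ z z' *
            ENNReal.ofReal (Real.sqrt (Φ z')) * f z')
      ≤ ∏ i, ENNReal.ofReal (β / (4*π) * ((τ i)^2 + c0 * ε^2 * (τ i)) ^ (-(1/2) : ℝ)) := by
    intro τ hτ
    have hE : (∫⁻ z : R2, ∫⁻ z' : R2,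
          g z * sphi Φ z * chain ε Φ k τ z z' * sphi Φ z' * f z') ^ 2
        ≤ ((∏ i, Cc c0 ε (τ i)) ^ 2 * ∫⁻ z : R2, g z ^ 2) * ∫⁻ z : R2, f z ^ 2 :=
      bilin Φ hΦ c0 hc0 hb ε hε k τ hτ g f hg hf
    have hE2 : (∫⁻ z : R2, ∫⁻ z' : R2,
          g z * sphi Φ z * chain ε Φ k τ z z' * sphi Φ z' * f z') ^ 2
        ≤ (∏ i, Cc c0 ε (τ i)) ^ 2 := by
      refine le_trans hE ?_
      calc ((∏ i, Cc c0 ε (τ i)) ^ 2 * ∫⁻ z : R2, g z ^ 2) * ∫⁻ z : R2, f z ^ 2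
          ≤ ((∏ i, Cc c0 ε (τ i)) ^ 2 * 1) * 1 :=
            mul_le_mul' (mul_le_mul' le_rfl hgn) hfn
        _ = (∏ i, Cc c0 ε (τ i)) ^ 2 := by simp
    have hE3 : (∫⁻ z : R2, ∫⁻ z' : R2,
          g z * sphi Φ z * chain ε Φ k τ z z' * sphi Φ z' * f z')
        ≤ ∏ i, Cc c0 ε (τ i) := by
      by_contra hlt
      push_neg at hlt
      exact absurd (lt_of_lt_of_le (ENNReal.pow_lt_pow_left two_ne_zero hlt) hE2)
        (lt_irrefl _)
    calc ENNReal.ofReal (β ^ (k+1)) * (∫⁻ z : R2, ∫⁻ z' : R2,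
            g z * ENNReal.ofReal (Real.sqrt (Φ z)) * chain ε Φ k τ z z' *
              ENNReal.ofReal (Real.sqrt (Φ z')) * f z')
        ≤ ENNReal.ofReal (β ^ (k+1)) * ∏ i, Cc c0 ε (τ i) := mul_le_mul_right hE3 _
      _ = ∏ i, ENNReal.ofReal β * Cc c0 ε (τ i) := by
          rw [Finset.prod_mul_distrib, Finset.prod_const, Finset.card_univ,
            Fintype.card_fin, ENNReal.ofReal_pow hβ]
      _ = ∏ i, ENNReal.ofReal (β / (4*π) * ((τ i)^2 + c0 * ε^2 * (τ i)) ^ (-(1/2) : ℝ)) := by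
          refine Finset.prod_congr rfl fun i _ => ?_
          rw [Cc, ← ENNReal.ofReal_mul hβ]
          congr 1
          ring
  calc ENNReal.ofReal (β ^ (k+2)) * simpInt (k+1) t (fun τ => ∫⁻ z : R2, ∫⁻ z' : R2,
          g z * ENNReal.ofReal (Real.sqrt (Φ z)) * chain ε Φ k τ z z' *
            ENNReal.ofReal (Real.sqrt (Φ z')) * f z')
      = ENNReal.ofReal β * (ENNReal.ofReal (β ^ (k+1)) * simpInt (k+1) t
          (fun τ => ∫⁻ z : R2, ∫⁻ z' : R2,
            g z * ENNReal.ofReal (Real.sqrt (Φ z)) * chain ε Φ k τ z z' *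
              ENNReal.ofReal (Real.sqrt (Φ z')) * f z')) := by
        rw [← mul_assoc, ← ENNReal.ofReal_mul hβ, ← pow_succ']
    _ ≤ ENNReal.ofReal β * simpInt (k+1) t (fun τ =>
          ∏ i, ENNReal.ofReal (β / (4*π) * ((τ i)^2 + c0 * ε^2 * (τ i)) ^ (-(1/2) : ℝ))) := by
        apply mul_le_mul_right
        rw [← simpInt_const_mul _ ENNReal.ofReal_ne_top]
        exact simpInt_mono _ _ _ _ (fun τ hτ => hterm τ hτ)

end Aux18

noncomputable section
open MeasureTheory Real Filter
open scoped ENNReal NNReal BigOperators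

theorem stmt18 (θ : ℝ) (Φ : R2 → ℝ) (hΦ : PhiOK Φ) (c0 : ℝ) (hc0 : 0 < c0)
    (hb : ∀ u : ℝ, 0 ≤ u →
      (∫ z : R2, ∫ z' : R2, Φ z * Real.exp (-(u * nrmsq (z - z')) / 4) * Φ z') ≤
        (1 + c0 * u)⁻¹)
    (ε : ℝ) (hε : 0 < ε) (hε1 : ε < 1) (hβ : 0 ≤ betaEps θ Φ ε)
    (t : ℝ) (ht : 0 < t)
    (g f : R2 → ℝ≥0∞) (hg : Measurable g) (hf : Measurable f)
    (hgn : (∫⁻ z, (g z) ^ 2) ≤ 1) (hfn : (∫⁻ z, (f z) ^ 2) ≤ 1) :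
    Jpairing θ Φ ε t g f ≤ Bfun (betaEps θ Φ ε) c0 ε t :=
  stmt18' θ Φ hΦ c0 hc0 hb ε hε hε1 hβ t ht g f hg hf hgn hfn

end
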